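/- arXiv:2510.18529 — 2 statements merged into one kernel-verified Lean document; each statement's English description precedes it below -/
import Mathlib

section
/- Let n ≥ 4 and let π ∈ S(ℤ_n). If t([π]) = n − 2, then π is a strong complete mapping, i.e., both x ↦ π(x) − x and x ↦ π(x) + x are permutations of ℤ_n. -/
/-!
Since `tCoset π = n - 2`, every `k` makes `σ = π * Equiv.addRight k`, i.e. `u ↦ π (u + k)`, a
permutation with at most two cycles, and `σ` fixes `π z` exactly when `π z - z = -k`.
If `π x - x = π y - y` with `x ≠ y`, the matching `k` gives `σ` two fixed points, hence three
cycles once `n ≥ 3`. If `π x + x = π y + y` with `x ≠ y`, then `k = x - π y` makes `σ` swap `π x`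
and `π y`; since `u ↦ π u - u` is now known to be onto, `σ` also has a fixed point, and a fourth
element of `ℤ_n` lies in a third cycle.
-/

/-- `cyc σ` is the number of cycles in the cycle decomposition of the permutation `σ`,
counting fixed points as cycles; i.e., the number of orbits of `σ`. -/
noncomputable def cyc {α : Type*} (σ : Equiv.Perm α) : ℕ :=
  Nat.card (Quotient (Setoid.mk σ.SameCycle
    ⟨fun x => Equiv.Perm.SameCycle.refl σ x, fun h => h.symm, fun h h' => h.trans h'⟩))

/-- `t(π) = n - cyc(π)`, the minimum number of transpositions whose product is `π`. -/
noncomputable def tPerm {n : ℕ} (π : Equiv.Perm (ZMod n)) : ℕ := n - cyc π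

/-- `t([π])`, the minimum of `t(π ∘ c^k)` over `k ∈ ℤ_n`, where `c : x ↦ x + 1`. -/
noncomputable def tCoset {n : ℕ} (π : Equiv.Perm (ZMod n)) : ℕ :=
  sInf { m : ℕ | ∃ k : ZMod n, m = tPerm (π * Equiv.addRight k) }

/-- The circular sorting number `t(n)`, the maximum of `t([π])` over `π ∈ S(ℤ_n)`. -/
noncomputable def tCirc (n : ℕ) : ℕ :=
  sSup { m : ℕ | ∃ π : Equiv.Perm (ZMod n), m = tCoset π }

open Equiv Function Set

section Cycles

variable {α : Type*} [Finite α] (σ : Perm α)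

lemma cyc_le_natCard : cyc σ ≤ Nat.card α :=
  Nat.card_le_card_of_surjective _ Quotient.mk''_surjective

lemma Equiv.Perm.SameCycle.mem_of_mapsTo {σ : Perm α} {s : Set α} {x y : α}
    (h : σ.SameCycle x y) (hs : MapsTo σ s s) (hx : x ∈ s) : y ∈ s := by
  obtain ⟨i, rfl⟩ := h.exists_nat_pow_eq
  exact hs.perm_pow i hx

lemma card_le_cyc_of_pairwise {s : Finset α}
    (hs : (s : Set α).Pairwise fun x y => ¬σ.SameCycle x y) : s.card ≤ cyc σ := by
  unfold cyc
  refine le_of_eq_of_le (by simp) (Nat.card_le_card_of_injective (fun x : s => Quotient.mk _ x) ?_)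
  intro x y hxy
  by_contra hne
  exact hs x.2 y.2 (Subtype.coe_ne_coe.mpr hne) (Quotient.exact hxy)

lemma three_le_cyc {a b c : α} (hab : ¬σ.SameCycle a b) (hac : ¬σ.SameCycle a c)
    (hbc : ¬σ.SameCycle b c) : 3 ≤ cyc σ := by
  classical
  have hne : ∀ {x y}, ¬σ.SameCycle x y → x ≠ y := fun h hxy => h (hxy ▸ .refl σ _)
  have hcard : ({a, b, c} : Finset α).card = 3 :=
    Finset.card_eq_three.mpr ⟨a, b, c, hne hab, hne hac, hne hbc, rfl⟩
  refine hcard ▸ card_le_cyc_of_pairwise σ ?_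
  simp [Set.pairwise_insert, Perm.sameCycle_comm, or_imp, forall_and, *]

lemma Finset.exists_notMem_of_card_lt_natCard {s : Finset α} (h : s.card < Nat.card α) :
    ∃ z, z ∉ s := by
  have := Fintype.ofFinite α
  obtain ⟨z, -, hz⟩ := Finset.exists_mem_notMem_of_card_lt_card (s := s) (t := .univ)
    (by rwa [Finset.card_univ, ← Nat.card_eq_fintype_card])
  exact ⟨z, hz⟩

variable {σ}

lemma three_le_cyc_of_fixed_of_fixed (hα : 3 ≤ Nat.card α) {a b : α} (ha : σ a = a)
    (hb : σ b = b) (hab : a ≠ b) : 3 ≤ cyc σ := by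
  classical
  obtain ⟨z, hz⟩ := Finset.exists_notMem_of_card_lt_natCard ((Finset.card_le_two (a := a) (b := b)).trans_lt hα)
  simp only [Finset.mem_insert, Finset.mem_singleton, not_or] at hz
  exact three_le_cyc σ (fun h => hab (h.eq_of_left ha)) (fun h => hz.1 (h.eq_of_left ha).symm)
    (fun h => hz.2 (h.eq_of_left hb).symm)

lemma three_le_cyc_of_fixed_of_swap (hα : 4 ≤ Nat.card α) {a b c : α} (ha : σ a = a)
    (hb : σ b = c) (hc : σ c = b) (hbc : b ≠ c) : 3 ≤ cyc σ := by
  classical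
  obtain ⟨z, hz⟩ := Finset.exists_notMem_of_card_lt_natCard
    ((Finset.card_le_three (a := a) (b := b) (c := c)).trans_lt hα)
  simp only [Finset.mem_insert, Finset.mem_singleton, not_or] at hz
  have hpair : MapsTo σ {b, c} {b, c} := by
    rintro x (rfl | rfl) <;> simp [hb, hc]
  refine three_le_cyc σ (b := b) (fun h => hbc ?_) (fun h => hz.1 (h.eq_of_left ha).symm)
    (fun h => ?_)
  · obtain rfl := h.eq_of_left ha
    exact ha ▸ hb
  · rcases h.mem_of_mapsTo hpair (by simp) with h | h
    exacts [hz.2.1 h, hz.2.2 h]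

end Cycles

section Shifts

variable {G : Type*} [AddCommGroup G] [Finite G] {π : Perm G}

lemma injective_sub_of_cyc_mul_addRight_le_two (hG : 3 ≤ Nat.card G)
    (hπ : ∀ k, cyc (π * Equiv.addRight k) ≤ 2) : Injective fun x => π x - x := by
  intro x y hxy
  by_contra hne
  have hfix : ∀ z, π z - z = π x - x → (π * Equiv.addRight (x - π x)) (π z) = π z := by
    intro z hz
    simp only [Perm.mul_apply, Equiv.coe_addRight]
    congr 1
    grind
  have := three_le_cyc_of_fixed_of_fixed hG (hfix x rfl) (hfix y hxy.symm) (π.injective.ne hne)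
  have := hπ (x - π x)
  omega

lemma injective_add_of_cyc_mul_addRight_le_two (hG : 4 ≤ Nat.card G)
    (hπ : ∀ k, cyc (π * Equiv.addRight k) ≤ 2) (hsub : Bijective fun x => π x - x) :
    Injective fun x => π x + x := by
  intro x y hxy
  by_contra hne
  have hσ := hπ (x - π y)
  set σ := π * Equiv.addRight (x - π y)
  obtain ⟨p, hp⟩ := hsub.surjective (π y - x)
  have hfix : σ (π p) = π p := by
    simp only [σ, Perm.mul_apply, Equiv.coe_addRight]
    congr 1
    grind
  have hyx : σ (π y) = π x := by
    simp only [σ, Perm.mul_apply, Equiv.coe_addRight]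
    congr 1
    abel
  have hxy' : σ (π x) = π y := by
    simp only [σ, Perm.mul_apply, Equiv.coe_addRight]
    congr 1
    grind
  have := three_le_cyc_of_fixed_of_swap hG hfix hyx hxy' (π.injective.ne (Ne.symm hne))
  omega

end Shifts

lemma cyc_mul_addRight_le_sub_tCoset {n : ℕ} [NeZero n] (π : Perm (ZMod n)) (k : ZMod n) :
    cyc (π * Equiv.addRight k) ≤ n - tCoset π := by
  have h₁ : tCoset π ≤ tPerm (π * Equiv.addRight k) := Nat.sInf_le ⟨k, rfl⟩
  have h₂ := cyc_le_natCard (π * Equiv.addRight k)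
  rw [Nat.card_zmod] at h₂
  unfold tPerm at h₁
  omega

theorem strongCompleteMapping_of_tCoset_eq (n : ℕ) (hn : 4 ≤ n) (π : Equiv.Perm (ZMod n))
    (ht : tCoset π = n - 2) :
    Function.Bijective (fun x : ZMod n => π x - x) ∧
      Function.Bijective (fun x : ZMod n => π x + x) := by
  have : NeZero n := ⟨by omega⟩
  have hcard : 4 ≤ Nat.card (ZMod n) := by rwa [Nat.card_zmod]
  have hπ (k : ZMod n) : cyc (π * Equiv.addRight k) ≤ 2 :=
    (cyc_mul_addRight_le_sub_tCoset π k).trans (by omega)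
  have hsub : Bijective fun x => π x - x := Finite.injective_iff_bijective.mp
    (injective_sub_of_cyc_mul_addRight_le_two (by omega) hπ)
  exact ⟨hsub, Finite.injective_iff_bijective.mp
    (injective_add_of_cyc_mul_addRight_le_two hcard hπ hsub)⟩
end

section
/- Let m, n ≥ 2 be integers. Let σ be the permutation of ℤ_m × ℤ_n given by σ(x, y) = (π(x), π_x(y)), where π ∈ S(ℤ_m) and π_x ∈ S(ℤ_n) for each x ∈ ℤ_m. Suppose i ∈ ℤ_m, t is an integer, and b ≥ 1 is such that the permutation y ↦ π_i(y + t) of ℤ_n has at least b cycles (counting fixed points). Then there exists an integer k such that σ ∘ c^k has at least b + 1 cycles (counting fixed points). -/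
/-!
Choose `k` with `c ^ k (π i, 0) = (i, t)`; this is possible because `c ^ a` moves the first
coordinate by `a` while `c ^ m` is the translation `(x, y) ↦ (x, y + 1)`. As `c ^ k` commutes with
`c ^ m`, it maps `(π i, y)` to `(i, y + t)`, so `σ * c ^ k` preserves the fibre `{π i} × ℤ_n` and
acts on it as `y ↦ ρ_i (y + t)`. The fibre therefore carries at least `b` orbits, and its
complement, nonempty because `m ≥ 2`, at least one more.
-/

open Equiv Function

theorem cyc_eq_card_quotient {α : Type*} (f : Perm α) :
    cyc f = Nat.card (Quotient (Perm.SameCycle.setoid f)) :=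
  rfl

theorem Equiv.Perm.pow_apply_of_semiconj {α β : Type*} {f : Perm α} {τ : Perm β} {e : β → α}
    (h : Semiconj e τ f) (k : ℕ) (y : β) : (f ^ k) (e y) = e ((τ ^ k) y) := by
  simpa only [Perm.coe_pow] using (h.iterate_right k y).symm

theorem cyc_lt_cyc_of_semiconj {α β : Type*} [Finite α] {f : Perm α} {τ : Perm β} {e : β → α}
    (he : Injective e) (h : Semiconj e τ f) {a : α} (ha : a ∉ Set.range e) :
    cyc τ < cyc f := by
  have : Finite β := Finite.of_injective e he
  have orbit_of : ∀ {y : β} {a : α}, f.SameCycle (e y) a → ∃ k : ℕ, a = e ((τ ^ k) y) := by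
    rintro y a hya
    obtain ⟨k, rfl⟩ := hya.exists_nat_pow_eq
    exact ⟨k, Perm.pow_apply_of_semiconj h k y⟩
  let g : Quotient (Perm.SameCycle.setoid τ) → Quotient (Perm.SameCycle.setoid f) :=
    Quotient.map e fun y y' hyy' => by
      obtain ⟨k, rfl⟩ := hyy'.exists_nat_pow_eq
      exact ⟨k, Perm.pow_apply_of_semiconj h k y⟩
  have hg : Injective g := by
    rintro ⟨y⟩ ⟨y'⟩ hyy'
    obtain ⟨k, hk⟩ := orbit_of (Quotient.exact hyy')
    exact Quotient.sound ⟨k, (he hk).symm⟩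
  have hga : ⟦a⟧ ∉ Set.range g := by
    rintro ⟨⟨y⟩, hy⟩
    obtain ⟨k, rfl⟩ := orbit_of (Quotient.exact hy)
    exact ha ⟨_, rfl⟩
  classical
  have := Fintype.ofFinite (Quotient (Perm.SameCycle.setoid f))
  have := Fintype.ofFinite (Quotient (Perm.SameCycle.setoid τ))
  simpa only [cyc_eq_card_quotient, Nat.card_eq_fintype_card] using
    Fintype.card_lt_of_injective_of_notMem g hg hga

namespace CarryShift

variable {m n : ℕ} {c : Perm (ZMod m × ZMod n)}
variable (hc : ∀ (x : ZMod m) (y : ZMod n),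
  c (x, y) = if x = (m : ZMod m) - 1 then (x + 1, y + 1) else (x + 1, y))
include hc

theorem fst_pow_apply (k : ℕ) (p : ZMod m × ZMod n) : ((c ^ k) p).1 = p.1 + k := by
  induction k with
  | zero => simp
  | succ k ih =>
    rw [pow_succ', Perm.mul_apply, ← Prod.mk.eta (p := (c ^ k) p), hc]
    split_ifs <;> simp [ih, add_assoc]

theorem pow_apply_natCast_of_lt {r k : ℕ} (hrk : r + k < m) (y : ZMod n) :
    (c ^ k) ((r : ZMod m), y) = (((r + k : ℕ) : ZMod m), y) := by
  induction k with
  | zero => simp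
  | succ k ih =>
    have hne : ((r + k : ℕ) : ZMod m) ≠ (m : ZMod m) - 1 := by
      rw [Ne, eq_sub_iff_add_eq, ← Nat.cast_add_one, ZMod.natCast_eq_natCast_iff']
      rw [Nat.mod_self, Nat.mod_eq_of_lt (by omega)]
      omega
    rw [pow_succ', Perm.mul_apply, ih (by omega), hc, if_neg hne, ← Nat.add_assoc,
      Nat.cast_succ]

theorem pow_self_apply [NeZero m] (x : ZMod m) (y : ZMod n) : (c ^ m) (x, y) = (x, y + 1) := by
  obtain ⟨v, hv, rfl⟩ : ∃ v < m, (v : ZMod m) = x := ⟨x.val, x.val_lt, x.natCast_zmod_val⟩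
  have hlast : ((m - 1 : ℕ) : ZMod m) = (m : ZMod m) - 1 := by
    rw [Nat.cast_sub (by omega), Nat.cast_one]
  have hsplit : c ^ m = c ^ v * c * c ^ (m - 1 - v) := by
    rw [← pow_succ, ← pow_add]; congr 1; omega
  rw [hsplit, Perm.mul_apply, Perm.mul_apply, pow_apply_natCast_of_lt hc (by omega),
    show v + (m - 1 - v) = m - 1 by omega, hc, if_pos hlast, hlast, sub_add_cancel,
    ZMod.natCast_self, ← Nat.cast_zero, pow_apply_natCast_of_lt hc (by omega), zero_add]

theorem pow_self_pow_apply [NeZero m] (j : ℕ) (x : ZMod m) (y : ZMod n) :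
    ((c ^ m) ^ j) (x, y) = (x, y + j) := by
  induction j with
  | zero => simp
  | succ j ih => rw [pow_succ', Perm.mul_apply, ih, pow_self_apply hc, Nat.cast_succ, add_assoc]

theorem pow_apply_eq_add [NeZero m] [NeZero n] (k : ℕ) (x : ZMod m) (y : ZMod n) :
    (c ^ k) (x, y) = (c ^ k) (x, 0) + (0, y) := by
  have hy : (x, y) = ((c ^ m) ^ y.val) (x, 0) := by
    rw [pow_self_pow_apply hc, zero_add, ZMod.natCast_zmod_val]
  rw [hy, ← Perm.mul_apply, ← pow_mul, pow_mul_comm, Perm.mul_apply, pow_mul,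
    ← Prod.mk.eta (p := (c ^ k) (x, 0)), pow_self_pow_apply hc, ZMod.natCast_zmod_val]
  exact Prod.ext (add_zero _).symm rfl

theorem exists_pow_apply_eq [NeZero m] [NeZero n] (p q : ZMod m × ZMod n) :
    ∃ k : ℕ, (c ^ k) p = q := by
  set a := (q.1 - p.1).val
  refine ⟨m * (q.2 - ((c ^ a) p).2).val + a, ?_⟩
  rw [pow_add, pow_mul, Perm.mul_apply, ← Prod.mk.eta (p := (c ^ a) p), pow_self_pow_apply hc,
    fst_pow_apply hc, ZMod.natCast_zmod_val, ZMod.natCast_zmod_val]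
  ext <;> simp

end CarryShift

theorem wreath_shift_many_cycles_general (m n : ℕ) (hm : 2 ≤ m) (hn : 2 ≤ n)
    (σ c : Equiv.Perm (ZMod m × ZMod n))
    (π : Equiv.Perm (ZMod m)) (ρ : ZMod m → Equiv.Perm (ZMod n))
    (hσ : ∀ (x : ZMod m) (y : ZMod n), σ (x, y) = (π x, ρ x y))
    (hc : ∀ (x : ZMod m) (y : ZMod n),
      c (x, y) = if x = (m : ZMod m) - 1 then (x + 1, y + 1) else (x + 1, y))
    (i : ZMod m) (t : ℤ) (b : ℕ)
    (hcyc : b ≤ cyc (ρ i * Equiv.addRight (t : ZMod n))) :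
    ∃ k : ℤ, b + 1 ≤ cyc (σ * c ^ k) := by
  have : NeZero m := ⟨by omega⟩
  have : NeZero n := ⟨by omega⟩
  have : Fact (1 < m) := ⟨hm⟩
  obtain ⟨k, hk⟩ := CarryShift.exists_pow_apply_eq hc (π i, 0) (i, (t : ZMod n))
  have hfiber : Semiconj (Prod.mk (π i)) ⇑(ρ i * Equiv.addRight (t : ZMod n)) ⇑(σ * c ^ k) :=
    fun y => by
      rw [Perm.mul_apply σ, CarryShift.pow_apply_eq_add hc, hk, Prod.mk_add_mk, add_zero, hσ,
        Perm.mul_apply, add_comm]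
      rfl
  have hoff : (π i + 1, 0) ∉ Set.range (Prod.mk (π i) : ZMod n → ZMod m × ZMod n) := by
    rintro ⟨y, hy⟩
    simpa using congrArg Prod.fst hy
  refine ⟨k, ?_⟩
  rw [zpow_natCast]
  exact hcyc.trans_lt (cyc_lt_cyc_of_semiconj (Prod.mk_right_injective _) hfiber hoff)

theorem wreath_shift_many_cycles (m n : ℕ) (hm : 2 ≤ m) (hn : 2 ≤ n)
    (σ c : Equiv.Perm (ZMod m × ZMod n))
    (π : Equiv.Perm (ZMod m)) (ρ : ZMod m → Equiv.Perm (ZMod n))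
    (hσ : ∀ (x : ZMod m) (y : ZMod n), σ (x, y) = (π x, ρ x y))
    (hc : ∀ (x : ZMod m) (y : ZMod n),
      c (x, y) = if x = (m : ZMod m) - 1 then (x + 1, y + 1) else (x + 1, y))
    (i : ZMod m) (t : ℤ) (b : ℕ) (hb : 1 ≤ b)
    (hcyc : b ≤ cyc (ρ i * Equiv.addRight (t : ZMod n))) :
    ∃ k : ℤ, b + 1 ≤ cyc (σ * c ^ k) :=
  wreath_shift_many_cycles_general m n hm hn σ c π ρ hσ hc i t b hcyc
end
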